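/- arXiv:1708.09748 — 6 statements merged into one kernel-verified Lean document; each statement's English description precedes it below -/
import Mathlib

section
/- The vector space $\Omega(\lambda,\alpha,h) = \mathbb{C}[t,\partial]$ with the action $d_m(\partial^i f) = \lambda^m (\partial - m)^i \big( (\partial + m h(t) - m(m-1)\alpha \frac{h(t)-h(\alpha)}{t-\alpha}) f(t) - m(t - m\alpha) f'(t) \big)$ and $c(\partial^i f) = 0$ is a module over the Virasoro algebra, i.e., $[d_m, d_k] w = (k-m) d_{m+k} w$ for all $m, k \in \mathbb{Z}$ and all $w \in \mathbb{C}[t,\partial]$. -/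
/-!
Write `d_m (∂^i f) = λ^m (∂ - m)^i (∂ f + L_m f)` with `L_m` (`coeffOp`) an operator on `ℂ[t]`.
Each `d_m` is `ℂ`-linear and turns multiplication by `∂ - c` into multiplication by
`∂ - (m + c)`, so on `∂^i f` the commutator `[d_m, d_k]` is `(∂ - m - k)^i` times its value on `f`.
For `f ∈ ℂ[t]` the relation reduces to `[L_m, L_k] f + k L_k f - m L_m f = (k - m) L_{m+k} f`,
a polynomial identity in which `q = (h - h(α)) / (t - α)` enters only through `h' = q + (t - α) q'`.
-/

noncomputable section
open Polynomial

/-- The exact polynomial quotient `(h(t) - h(α)) / (t - α)`. -/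
def hquot (h : ℂ[X]) (α : ℂ) : ℂ[X] := (h - C (h.eval α)) /ₘ (X - C α)

/-- The action of `d_m` on `Ω(λ,α,h) = ℂ[t,∂]`, modelled as `(ℂ[t])[∂]`
(polynomials in the outer variable `∂` with coefficients in `ℂ[t]`): on `∂^i f(t)`,
`d_m(∂^i f) = λ^m (∂-m)^i ((∂ + m h(t) - m(m-1) α (h(t)-h(α))/(t-α)) f(t) - m (t - mα) f'(t))`,
extended linearly; `c` acts by `0`. -/
def omegaD (lam α : ℂ) (h : ℂ[X]) (m : ℤ) (p : Polynomial ℂ[X]) : Polynomial ℂ[X] :=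
  lam ^ m • p.sum fun i f =>
    ((X : Polynomial ℂ[X]) - Polynomial.C (C (m : ℂ))) ^ i *
      ((X : Polynomial ℂ[X]) * Polynomial.C f +
        Polynomial.C ((C (m : ℂ) * h - C ((m : ℂ) * ((m : ℂ) - 1) * α) * hquot h α) * f
          - C (m : ℂ) * ((X - C ((m : ℂ) * α)) * derivative f)))

namespace OmegaModule

local notation "∂" => (X : Polynomial ℂ[X])

local notation:max "𝒞" c:max => Polynomial.C (C c)

lemma smul_eq_C_C_mul (a : ℂ) (p : Polynomial ℂ[X]) : a • p = 𝒞 a * p := by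
  rw [Algebra.smul_def]
  rfl

lemma X_sub_C_mul_hquot (h : ℂ[X]) (α : ℂ) : (X - C α) * hquot h α = h - C (h.eval α) := by
  have hdiv := modByMonic_add_div (h - C (h.eval α)) (X - C α)
  rwa [(modByMonic_eq_zero_iff_dvd (monic_X_sub_C α)).mpr X_sub_C_dvd_sub_C_eval, zero_add] at hdiv

lemma derivative_eq_hquot_add (h : ℂ[X]) (α : ℂ) :
    derivative h = hquot h α + (X - C α) * derivative (hquot h α) := by
  simpa using (congrArg derivative (X_sub_C_mul_hquot h α)).symm

def coeffOp (α : ℂ) (h : ℂ[X]) (m : ℂ) (f : ℂ[X]) : ℂ[X] :=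
  (C m * h - C (m * (m - 1) * α) * hquot h α) * f - C m * ((X - C (m * α)) * derivative f)

lemma coeffOp_commutator (α : ℂ) (h : ℂ[X]) (m k : ℂ) (f : ℂ[X]) :
    coeffOp α h m (coeffOp α h k f) - coeffOp α h k (coeffOp α h m f)
      + C k * coeffOp α h k f - C m * coeffOp α h m f
    = C (k - m) * coeffOp α h (m + k) f := by
  simp only [coeffOp, derivative_mul, derivative_C, derivative_X, derivative_one,
    map_mul, map_sub, map_add, map_one, zero_mul, zero_add]
  linear_combination (C α * C k * C m * (C m - C k)) * f * derivative_eq_hquot_add h α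

lemma coeffOp_smul (α : ℂ) (h : ℂ[X]) (m a : ℂ) (f : ℂ[X]) :
    coeffOp α h m (a • f) = a • coeffOp α h m f := by
  simp only [coeffOp, derivative_smul, mul_smul_comm, smul_sub]

variable (lam α : ℂ) (h : ℂ[X]) (m : ℤ)

lemma omegaD_monomial (i : ℕ) (f : ℂ[X]) :
    omegaD lam α h m (monomial i f) =
      lam ^ m • ((∂ - 𝒞 (m : ℂ)) ^ i * (∂ * Polynomial.C f + Polynomial.C (coeffOp α h m f))) := by
  rw [omegaD, sum_monomial_index] <;> simp [coeffOp]

lemma omegaD_add (p q : Polynomial ℂ[X]) :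
    omegaD lam α h m (p + q) = omegaD lam α h m p + omegaD lam α h m q := by
  rw [omegaD, omegaD, omegaD, sum_add_index, smul_add]
  · simp
  · intro _ _ _
    simp only [map_add, map_sub, map_mul]
    ring

lemma omegaD_smul (a : ℂ) (p : Polynomial ℂ[X]) :
    omegaD lam α h m (a • p) = a • omegaD lam α h m p := by
  induction p using Polynomial.induction_on' with
  | add p q hp hq => rw [smul_add, omegaD_add, hp, hq, omegaD_add, smul_add]
  | monomial i f =>
    rw [smul_monomial, omegaD_monomial, omegaD_monomial, coeffOp_smul, ← smul_C, ← smul_C,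
      mul_smul_comm, ← smul_add, mul_smul_comm, smul_comm]

lemma omegaD_C (f : ℂ[X]) :
    omegaD lam α h m (Polynomial.C f) =
      lam ^ m • (∂ * Polynomial.C f + Polynomial.C (coeffOp α h m f)) := by
  simpa using omegaD_monomial lam α h m 0 f

lemma omegaD_X_mul (p : Polynomial ℂ[X]) :
    omegaD lam α h m (∂ * p) = (∂ - 𝒞 (m : ℂ)) * omegaD lam α h m p := by
  induction p using Polynomial.induction_on' with
  | add p q hp hq => rw [mul_add, omegaD_add, hp, hq, omegaD_add, mul_add]
  | monomial i f =>
    rw [X_mul_monomial, omegaD_monomial, omegaD_monomial, mul_smul_comm, pow_succ', mul_assoc]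

lemma omegaD_X_sub_C_mul (c : ℂ) (p : Polynomial ℂ[X]) :
    omegaD lam α h m ((∂ - 𝒞 c) * p) = (∂ - 𝒞 (m + c)) * omegaD lam α h m p := by
  have hsplit : (∂ - 𝒞 c) * p = ∂ * p + (-c) • p := by
    rw [smul_eq_C_C_mul, map_neg, map_neg]; ring
  rw [hsplit, omegaD_add, omegaD_X_mul, omegaD_smul, smul_eq_C_C_mul]
  simp only [map_add, map_neg]
  ring

lemma omegaD_X_sub_C_pow_mul (c : ℂ) (i : ℕ) (p : Polynomial ℂ[X]) :
    omegaD lam α h m ((∂ - 𝒞 c) ^ i * p) = (∂ - 𝒞 (m + c)) ^ i * omegaD lam α h m p := by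
  induction i with
  | zero => simp
  | succ i ih => rw [pow_succ', mul_assoc, omegaD_X_sub_C_mul, ih, pow_succ', mul_assoc]

lemma omegaD_X_pow_mul (i : ℕ) (p : Polynomial ℂ[X]) :
    omegaD lam α h m (∂ ^ i * p) = (∂ - 𝒞 (m : ℂ)) ^ i * omegaD lam α h m p := by
  simpa using omegaD_X_sub_C_pow_mul lam α h m 0 i p

lemma omegaD_omegaD_X_pow_mul (k : ℤ) (i : ℕ) (p : Polynomial ℂ[X]) :
    omegaD lam α h m (omegaD lam α h k (∂ ^ i * p)) =
      (∂ - 𝒞 ((m + k : ℤ) : ℂ)) ^ i * omegaD lam α h m (omegaD lam α h k p) := by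
  rw [omegaD_X_pow_mul, omegaD_X_sub_C_pow_mul, Int.cast_add]

lemma omegaD_omegaD_C (k : ℤ) (f : ℂ[X]) :
    omegaD lam α h m (omegaD lam α h k (Polynomial.C f)) =
      (lam ^ m * lam ^ k) • ((∂ - 𝒞 (m : ℂ)) * (∂ * Polynomial.C f + Polynomial.C (coeffOp α h m f))
        + ∂ * Polynomial.C (coeffOp α h k f) + Polynomial.C (coeffOp α h m (coeffOp α h k f))) := by
  rw [omegaD_C, omegaD_smul, omegaD_add, omegaD_X_mul, omegaD_C, omegaD_C, mul_smul_comm,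
    ← smul_add, smul_smul, mul_comm (lam ^ k), add_assoc]

lemma omegaD_commutator_C (hlam : lam ≠ 0) (k : ℤ) (f : ℂ[X]) :
    omegaD lam α h m (omegaD lam α h k (Polynomial.C f))
        - omegaD lam α h k (omegaD lam α h m (Polynomial.C f)) =
      ((k - m : ℤ) : ℂ) • omegaD lam α h (m + k) (Polynomial.C f) := by
  have hcomm := congrArg Polynomial.C (coeffOp_commutator α h m k f)
  simp only [map_sub, map_add, map_mul] at hcomm
  rw [omegaD_omegaD_C, omegaD_omegaD_C, omegaD_C, zpow_add₀ hlam, mul_comm (lam ^ k)]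
  simp only [smul_eq_C_C_mul, map_mul, map_sub, Int.cast_sub, Int.cast_add]
  linear_combination 𝒞 (lam ^ m) * 𝒞 (lam ^ k) * hcomm

end OmegaModule

open OmegaModule in
/-- `Ω(λ,α,h)` is a module over the Virasoro algebra:
`[d_m, d_k] w = (k - m) d_{m+k} w` for all `m, k ∈ ℤ` and all `w ∈ ℂ[t,∂]`
(the central term vanishes since `c` acts by `0`). -/
theorem stmt3 (lam : ℂ) (hlam : lam ≠ 0) (α : ℂ) (h : ℂ[X]) (m k : ℤ) (w : Polynomial ℂ[X]) :
    omegaD lam α h m (omegaD lam α h k w) - omegaD lam α h k (omegaD lam α h m w) =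
      ((k - m : ℤ) : ℂ) • omegaD lam α h (m + k) w := by
  induction w using Polynomial.induction_on' with
  | add p q hp hq =>
    rw [omegaD_add, omegaD_add, omegaD_add, omegaD_add, omegaD_add, smul_add, ← hp, ← hq]
    abel
  | monomial i f =>
    rw [← C_mul_X_pow_eq_monomial, mul_comm, omegaD_omegaD_X_pow_mul, omegaD_omegaD_X_pow_mul,
      omegaD_X_pow_mul, add_comm k m, ← mul_sub, omegaD_commutator_C lam α h m hlam,
      mul_smul_comm]
end
end

section
/- The vector space $\Omega(\mu,\beta) = \mathbb{C}[\partial]$ with action $d_k(\partial^n) = \mu^k (\partial - k)^n (\partial - \beta k)$ and $c(\partial^n) = 0$ is a module over the Virasoro algebra, i.e., $[d_m, d_k] w = (k-m) d_{m+k} w$ for all $m, k \in \mathbb{Z}$ and $w \in \mathbb{C}[\partial]$. -/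
noncomputable section
open Polynomial

/-- The action of `d_k` on `Ω(μ,β) = ℂ[∂]`: on the basis element `∂^n` it is
`d_k(∂^n) = μ^k (∂ - k)^n (∂ - β k)`, extended linearly; `c` acts by `0`. -/
def omega2D (mu β : ℂ) (k : ℤ) (p : ℂ[X]) : ℂ[X] :=
  mu ^ k • p.sum fun n a => C a * (X - C (k : ℂ)) ^ n * (X - C (β * k))

lemma omega2D_eq (mu β : ℂ) (k : ℤ) (p : ℂ[X]) :
    omega2D mu β k p = mu ^ k • (p.comp (X - C (k : ℂ)) * (X - C (β * k))) := by
  unfold omega2D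
  congr 1
  rw [Polynomial.comp, Polynomial.eval₂_eq_sum]
  simp [Polynomial.sum, Finset.sum_mul]

/-- `Ω(μ,β)` is a module over the Virasoro algebra:
`[d_m, d_k] w = (k - m) d_{m+k} w` for all `m, k ∈ ℤ` and `w ∈ ℂ[∂]`
(the central term vanishes since `c` acts by `0`). -/
theorem stmt4 (mu β : ℂ) (hmu : mu ≠ 0) (m k : ℤ) (w : ℂ[X]) :
    omega2D mu β m (omega2D mu β k w) - omega2D mu β k (omega2D mu β m w) =
      ((k - m : ℤ) : ℂ) • omega2D mu β (m + k) w := by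
  rw [omega2D_eq, omega2D_eq, omega2D_eq, omega2D_eq, omega2D_eq]
  simp only [smul_comp, mul_comp, sub_comp, X_comp, C_comp, comp_assoc,
    smul_mul_assoc, smul_smul, ← zpow_add₀ hmu]
  have ha : (X : ℂ[X]) - C (m : ℂ) - C (k : ℂ) = X - C ((m + k : ℤ) : ℂ) := by
    push_cast; rw [sub_sub, C_add]
  have hb : (X : ℂ[X]) - C (k : ℂ) - C (m : ℂ) = X - C ((m + k : ℤ) : ℂ) := by
    push_cast; rw [sub_sub, C_add, add_comm]
  rw [ha, hb, add_comm k m, smul_eq_C_mul, smul_eq_C_mul]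
  push_cast
  simp only [smul_eq_C_mul, map_add, map_sub, map_mul]
  ring
end
end

section
/- Let $\lambda, \alpha, \beta \in \mathbb{C}^*$, $h \in \mathbb{C}[t]$ with $\deg h = 1$, and $m \in \mathbb{Z}_{\geq 0}$. In the tensor product Virasoro module $\Omega(\lambda,\alpha,h) \otimes \Omega(\lambda,\beta)$, identified with $\mathbb{C}[\partial_1, \partial_2, t]$ (where $\partial_1, t$ come from the first factor and $\partial_2$ from the second), the subspace $W_m$ spanned by $\{\partial_1^l (\partial_1 + \partial_2)^n f(t) : 0 \le l \le m,\ n \in \mathbb{Z}_{\geq 0},\ f \in \mathbb{C}[t]\}$ is a Virasoro submodule. -/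
noncomputable section
open Polynomial

/-- `F(f) = ((h(t)-h(α))/(t-α)) f - f'`. -/
def Fop (h : ℂ[X]) (α : ℂ) (f : ℂ[X]) : ℂ[X] := hquot h α * f - derivative f

/-- `G(f) = h(α) f + t F(f)`. -/
def Gop (h : ℂ[X]) (α : ℂ) (f : ℂ[X]) : ℂ[X] := C (h.eval α) * f + X * Fop h α f

/-- The tensor product `Ω(λ,α,h) ⊗ Ω(λ,β)`, identified with `ℂ[∂₁,∂₂,t]`:
variable `0` is `∂₁`, variable `1` is `∂₂`, variable `2` is `t`. -/
abbrev P3 : Type := MvPolynomial (Fin 3) ℂ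

/-- The embedding of `ℂ[t]` into `ℂ[∂₁,∂₂,t]` (the variable `t` is `X 2`). -/
def embt (f : ℂ[X]) : P3 := Polynomial.aeval (MvPolynomial.X (2 : Fin 3)) f

/-- The diagonal Virasoro action of `d_k` on `Ω(λ,α,h) ⊗ Ω(λ,β) = ℂ[∂₁,∂₂,t]`:
on the monomial `∂₁^a t^c ⊗ ∂₂^b` it is
`d_k(∂₁^a t^c) ⊗ ∂₂^b + ∂₁^a t^c ⊗ d_k(∂₂^b)`, where
`d_k(∂₁^a t^c) = λ^k (∂₁-k)^a (∂₁ t^c + k G(t^c) - k² α F(t^c))` and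
`d_k(∂₂^b) = λ^k (∂₂-k)^b (∂₂ - β k)`, extended linearly; `c` acts by `0`. -/
def tensorD (lam α β : ℂ) (h : ℂ[X]) (k : ℤ) (p : P3) : P3 :=
  lam ^ k • ∑ e ∈ p.support,
    MvPolynomial.C (MvPolynomial.coeff e p) *
      ((MvPolynomial.X (0 : Fin 3) - MvPolynomial.C ((k : ℂ))) ^ (e 0) *
          (MvPolynomial.X (0 : Fin 3) * embt (Polynomial.X ^ (e 2))
            + MvPolynomial.C ((k : ℂ)) * embt (Gop h α (Polynomial.X ^ (e 2)))
            - MvPolynomial.C ((k : ℂ) ^ 2 * α) * embt (Fop h α (Polynomial.X ^ (e 2)))) *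
          (MvPolynomial.X (1 : Fin 3)) ^ (e 1)
        + (MvPolynomial.X (0 : Fin 3)) ^ (e 0) * embt (Polynomial.X ^ (e 2)) *
            (MvPolynomial.X (1 : Fin 3) - MvPolynomial.C ((k : ℂ))) ^ (e 1) *
            (MvPolynomial.X (1 : Fin 3) - MvPolynomial.C (β * k)))

/-- The subspace `W_m` of `Ω(λ,α,h) ⊗ Ω(λ,β) = ℂ[∂₁,∂₂,t]` spanned by
`{∂₁^l (∂₁+∂₂)^n f(t) : 0 ≤ l ≤ m, n ∈ ℤ≥0, f ∈ ℂ[t]}` (indexed by `m : ℤ`, so that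
`W_{-1} = 0`). -/
def Wsub (m : ℤ) : Submodule ℂ P3 :=
  Submodule.span ℂ {q | ∃ (l n : ℕ) (f : ℂ[X]), (l : ℤ) ≤ m ∧
    q = (MvPolynomial.X (0 : Fin 3)) ^ l *
      (MvPolynomial.X (0 : Fin 3) + MvPolynomial.X (1 : Fin 3)) ^ n * embt f}

namespace Stmt7Aux
open MvPolynomial

lemma embt_mul (f g : ℂ[X]) : embt (f * g) = embt f * embt g := by simp [embt]
lemma embt_add (f g : ℂ[X]) : embt (f + g) = embt f + embt g := by simp [embt]
lemma embt_sub (f g : ℂ[X]) : embt (f - g) = embt f - embt g := by simp [embt]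
lemma embt_C (a : ℂ) : embt (Polynomial.C a) = MvPolynomial.C a := by
  simp [embt, MvPolynomial.algebraMap_eq]
lemma embt_X : embt Polynomial.X = X 2 := by simp [embt]
lemma embt_pow (f : ℂ[X]) (n : ℕ) : embt (f ^ n) = embt f ^ n := by simp [embt]

lemma pderiv2_embt (f : ℂ[X]) :
    pderiv (2 : Fin 3) (embt f) = embt (derivative f) := by
  induction f using Polynomial.induction_on' with
  | add p q hp hq => simp only [embt, map_add] at hp hq ⊢; rw [hp, hq]
  | monomial n a =>
      simp [embt, Polynomial.aeval_monomial, Derivation.leibniz, Derivation.leibniz_pow,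
        pderiv_X_self, derivative_monomial, smul_smul, MvPolynomial.algebraMap_eq]
      ring

/-- Substitution `∂₁ ↦ ∂₁ - k`. -/
def Ssub (k : ℤ) : P3 →ₐ[ℂ] P3 :=
  aeval (fun i => if i = 0 then X 0 - MvPolynomial.C (k : ℂ) else X i)

/-- Substitution `∂₂ ↦ ∂₂ - k`. -/
def Tsub (k : ℤ) : P3 →ₐ[ℂ] P3 :=
  aeval (fun i => if i = 1 then X 1 - MvPolynomial.C (k : ℂ) else X i)

lemma Ssub_X0 (k : ℤ) : Ssub k (X 0) = X 0 - MvPolynomial.C (k : ℂ) := by simp [Ssub]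
lemma Ssub_X1 (k : ℤ) : Ssub k (X 1) = X 1 := by simp [Ssub]
lemma Ssub_X2 (k : ℤ) : Ssub k (X 2) = X 2 := by simp [Ssub]
lemma Ssub_C (k : ℤ) (a : ℂ) : Ssub k (MvPolynomial.C a) = MvPolynomial.C a := by
  simp [Ssub]
lemma Tsub_X0 (k : ℤ) : Tsub k (X 0) = X 0 := by simp [Tsub]
lemma Tsub_X1 (k : ℤ) : Tsub k (X 1) = X 1 - MvPolynomial.C (k : ℂ) := by simp [Tsub]
lemma Tsub_X2 (k : ℤ) : Tsub k (X 2) = X 2 := by simp [Tsub]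
lemma Tsub_C (k : ℤ) (a : ℂ) : Tsub k (MvPolynomial.C a) = MvPolynomial.C a := by
  simp [Tsub]

lemma Ssub_embt (k : ℤ) (f : ℂ[X]) : Ssub k (embt f) = embt f := by
  rw [embt, ← Polynomial.aeval_algHom_apply, Ssub_X2]
lemma Tsub_embt (k : ℤ) (f : ℂ[X]) : Tsub k (embt f) = embt f := by
  rw [embt, ← Polynomial.aeval_algHom_apply, Tsub_X2]

/-- The operator `F` extended to `ℂ[∂₁,∂₂,t]`. -/
def FFl (h : ℂ[X]) (α : ℂ) : P3 →ₗ[ℂ] P3 :=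
  LinearMap.mulLeft ℂ (embt (hquot h α)) - (pderiv (2 : Fin 3)).toLinearMap

lemma FFl_apply (h : ℂ[X]) (α : ℂ) (p : P3) :
    FFl h α p = embt (hquot h α) * p - pderiv (2 : Fin 3) p := rfl

lemma FFl_mul (h : ℂ[X]) (α : ℂ) (w : P3) (hw : pderiv (2 : Fin 3) w = 0) (f : ℂ[X]) :
    FFl h α (w * embt f) = w * embt (Fop h α f) := by
  rw [FFl_apply, Fop, embt_sub, embt_mul, Derivation.leibniz, hw, pderiv2_embt]
  simp only [smul_eq_mul, mul_zero, add_zero]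
  ring

/-- The operator `d_k` (without the scalar `λ^k`) as a linear map. -/
def Dlin (α β : ℂ) (h : ℂ[X]) (k : ℤ) : P3 →ₗ[ℂ] P3 :=
  LinearMap.mulLeft ℂ (X 0) ∘ₗ (Ssub k).toLinearMap
  + LinearMap.mulLeft ℂ (MvPolynomial.C (k : ℂ)) ∘ₗ
      (LinearMap.mulLeft ℂ (MvPolynomial.C (h.eval α)) ∘ₗ (Ssub k).toLinearMap
        + LinearMap.mulLeft ℂ (X 2) ∘ₗ FFl h α ∘ₗ (Ssub k).toLinearMap)
  - LinearMap.mulLeft ℂ (MvPolynomial.C ((k : ℂ) ^ 2 * α)) ∘ₗ FFl h α ∘ₗ (Ssub k).toLinearMap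
  + LinearMap.mulLeft ℂ (X 1 - MvPolynomial.C (β * k)) ∘ₗ (Tsub k).toLinearMap

lemma Dlin_apply (α β : ℂ) (h : ℂ[X]) (k : ℤ) (p : P3) :
    Dlin α β h k p =
      X 0 * Ssub k p
      + MvPolynomial.C (k : ℂ) *
          (MvPolynomial.C (h.eval α) * Ssub k p + X 2 * FFl h α (Ssub k p))
      - MvPolynomial.C ((k : ℂ) ^ 2 * α) * FFl h α (Ssub k p)
      + (X 1 - MvPolynomial.C (β * k)) * Tsub k p := rfl

lemma embt_Gop (h : ℂ[X]) (α : ℂ) (f : ℂ[X]) :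
    embt (Gop h α f) = MvPolynomial.C (h.eval α) * embt f + X 2 * embt (Fop h α f) := by
  rw [Gop, embt_add, embt_mul, embt_mul, embt_C, embt_X]

lemma monomial_eq3 (e : Fin 3 →₀ ℕ) (c : ℂ) :
    (monomial e c : P3) = MvPolynomial.C c * X 0 ^ e 0 * X 1 ^ e 1 * X 2 ^ e 2 := by
  rw [monomial_eq, Finsupp.prod_fintype _ _ (fun i => pow_zero _)]
  rw [Fin.prod_univ_three]
  ring

lemma Dlin_monomial (α β : ℂ) (h : ℂ[X]) (k : ℤ) (e : Fin 3 →₀ ℕ) (c : ℂ) :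
    Dlin α β h k (monomial e c) =
      MvPolynomial.C c *
        ((X (0 : Fin 3) - MvPolynomial.C ((k : ℂ))) ^ (e 0) *
            (X (0 : Fin 3) * embt (Polynomial.X ^ (e 2))
              + MvPolynomial.C ((k : ℂ)) * embt (Gop h α (Polynomial.X ^ (e 2)))
              - MvPolynomial.C ((k : ℂ) ^ 2 * α) * embt (Fop h α (Polynomial.X ^ (e 2)))) *
            (X (1 : Fin 3)) ^ (e 1)
          + (X (0 : Fin 3)) ^ (e 0) * embt (Polynomial.X ^ (e 2)) *
              (X (1 : Fin 3) - MvPolynomial.C ((k : ℂ))) ^ (e 1) *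
              (X (1 : Fin 3) - MvPolynomial.C (β * k))) := by
  have hX2 : (X (2 : Fin 3) : P3) ^ e 2 = embt (Polynomial.X ^ e 2) := by
    rw [embt_pow, embt_X]
  have hS : Ssub k (monomial e c) =
      (MvPolynomial.C c * (X 0 - MvPolynomial.C (k : ℂ)) ^ e 0 * X 1 ^ e 1) *
        embt (Polynomial.X ^ e 2) := by
    rw [monomial_eq3, map_mul, map_mul, map_mul, map_pow, map_pow, map_pow,
      Ssub_X0, Ssub_X1, Ssub_X2, Ssub_C, hX2]
  have hT : Tsub k (monomial e c) =
      MvPolynomial.C c * X 0 ^ e 0 * (X 1 - MvPolynomial.C (k : ℂ)) ^ e 1 *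
        embt (Polynomial.X ^ e 2) := by
    rw [monomial_eq3, map_mul, map_mul, map_mul, map_pow, map_pow, map_pow,
      Tsub_X0, Tsub_X1, Tsub_X2, Tsub_C, hX2]
  have hpd : pderiv (2 : Fin 3)
      (MvPolynomial.C c * (X (0 : Fin 3) - MvPolynomial.C ((k : ℂ))) ^ e 0 * X 1 ^ e 1 : P3) = 0 := by
    simp [Derivation.leibniz, Derivation.leibniz_pow,
      pderiv_X_of_ne (show (0 : Fin 3) ≠ 2 by decide),
      pderiv_X_of_ne (show (1 : Fin 3) ≠ 2 by decide)]
  rw [Dlin_apply, hS, hT, FFl_mul _ _ _ hpd, embt_Gop]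
  ring

lemma tensorD_eq (lam α β : ℂ) (h : ℂ[X]) (k : ℤ) (p : P3) :
    tensorD lam α β h k p = lam ^ k • Dlin α β h k p := by
  rw [tensorD]
  congr 1
  have h1 : Dlin α β h k p
      = Dlin α β h k (∑ e ∈ p.support, monomial e (coeff e p)) := by
    rw [support_sum_monomial_coeff]
  rw [h1, map_sum]
  exact Finset.sum_congr rfl fun e _ => (Dlin_monomial α β h k e (coeff e p)).symm

lemma deg_aux (c : ℂ) (l : ℕ) :
    (Polynomial.X *
      ((Polynomial.X - Polynomial.C c) ^ l - Polynomial.X ^ l) : ℂ[X]).natDegree ≤ l := by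
  induction l with
  | zero => simp
  | succ l ih =>
      have hrw : (Polynomial.X *
            ((Polynomial.X - Polynomial.C c) ^ (l + 1) - Polynomial.X ^ (l + 1)) : ℂ[X])
          = (Polynomial.X - Polynomial.C c) *
              (Polynomial.X * ((Polynomial.X - Polynomial.C c) ^ l - Polynomial.X ^ l))
            - Polynomial.C c * Polynomial.X ^ (l + 1) := by ring
      rw [hrw]
      refine le_trans (Polynomial.natDegree_sub_le _ _) (max_le ?_ ?_)
      · refine le_trans (Polynomial.natDegree_mul_le) ?_
        have h1 : (Polynomial.X - Polynomial.C c : ℂ[X]).natDegree ≤ 1 :=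
          le_of_eq (Polynomial.natDegree_X_sub_C c)
        omega
      · refine le_trans (Polynomial.natDegree_C_mul_le _ _) ?_
        simp

lemma gen_mem (m : ℤ) (l n : ℕ) (f : ℂ[X]) (hl : (l : ℤ) ≤ m) :
    (X (0 : Fin 3) : P3) ^ l * (X 0 + X 1) ^ n * embt f ∈ Wsub m :=
  Submodule.subset_span ⟨l, n, f, hl, rfl⟩

lemma step1_mem (m : ℤ) (l : ℕ) (Q f : ℂ[X]) (hl : (l : ℤ) ≤ m) :
    (X (0 : Fin 3) : P3) ^ l * Polynomial.aeval (X 0 + X 1 : P3) Q * embt f ∈ Wsub m := by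
  induction Q using Polynomial.induction_on' with
  | add p q hp hq =>
      rw [map_add, mul_add, add_mul]
      exact Submodule.add_mem _ hp hq
  | monomial n a =>
      rw [Polynomial.aeval_monomial]
      have h1 : (X (0 : Fin 3) : P3) ^ l * (algebraMap ℂ P3 a * (X 0 + X 1) ^ n) * embt f
          = a • ((X (0 : Fin 3) : P3) ^ l * (X 0 + X 1) ^ n * embt f) := by
        rw [MvPolynomial.algebraMap_eq, MvPolynomial.smul_eq_C_mul]
        ring
      rw [h1]
      exact Submodule.smul_mem _ _ (gen_mem m l n f hl)

lemma mem_W (m : ℕ) (P Q f : ℂ[X]) (hP : P.natDegree ≤ m) :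
    Polynomial.aeval (X 0 : P3) P * Polynomial.aeval (X 0 + X 1 : P3) Q * embt f
      ∈ Wsub (m : ℤ) := by
  have hrw : Polynomial.aeval (X 0 : P3) P
      = ∑ i ∈ P.support, MvPolynomial.C (P.coeff i) * (X 0 : P3) ^ i := by
    conv_lhs => rw [P.as_sum_support]
    rw [map_sum]
    exact Finset.sum_congr rfl fun i _ => by
      rw [Polynomial.aeval_monomial, MvPolynomial.algebraMap_eq]
  rw [hrw, Finset.sum_mul, Finset.sum_mul]
  refine Submodule.sum_mem _ fun i hi => ?_
  have hi' : (i : ℤ) ≤ (m : ℤ) := by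
    exact_mod_cast le_trans (Polynomial.le_natDegree_of_mem_supp i hi) hP
  have h1 : MvPolynomial.C (P.coeff i) * (X 0 : P3) ^ i *
        Polynomial.aeval (X 0 + X 1 : P3) Q * embt f
      = (P.coeff i) •
        ((X (0 : Fin 3) : P3) ^ i * Polynomial.aeval (X 0 + X 1 : P3) Q * embt f) := by
    rw [MvPolynomial.smul_eq_C_mul]; ring
  rw [h1]
  exact Submodule.smul_mem _ _ (step1_mem (m : ℤ) i Q f hi')

lemma Dlin_gen (α β : ℂ) (h : ℂ[X]) (k : ℤ) (l n : ℕ) (f : ℂ[X]) :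
    Dlin α β h k ((X (0 : Fin 3) : P3) ^ l * (X 0 + X 1) ^ n * embt f) =
      Polynomial.aeval (X 0 : P3)
          (Polynomial.X * ((Polynomial.X - Polynomial.C (k : ℂ)) ^ l - Polynomial.X ^ l)) *
        Polynomial.aeval (X 0 + X 1 : P3) ((Polynomial.X - Polynomial.C (k : ℂ)) ^ n) * embt f
      + Polynomial.aeval (X 0 : P3) ((Polynomial.X - Polynomial.C (k : ℂ)) ^ l) *
          Polynomial.aeval (X 0 + X 1 : P3) ((Polynomial.X - Polynomial.C (k : ℂ)) ^ n) *
          embt (Polynomial.C (k : ℂ) * Gop h α f - Polynomial.C ((k : ℂ) ^ 2 * α) * Fop h α f)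
      + Polynomial.aeval (X 0 : P3) (Polynomial.X ^ l : ℂ[X]) *
          Polynomial.aeval (X 0 + X 1 : P3)
            (Polynomial.X * (Polynomial.X - Polynomial.C (k : ℂ)) ^ n) * embt f
      + Polynomial.aeval (X 0 : P3) (Polynomial.X ^ l : ℂ[X]) *
          Polynomial.aeval (X 0 + X 1 : P3) ((Polynomial.X - Polynomial.C (k : ℂ)) ^ n) *
          embt (Polynomial.C (-(β * k)) * f) := by
  have hS : Ssub k ((X (0 : Fin 3) : P3) ^ l * (X 0 + X 1) ^ n * embt f)
      = ((X 0 - MvPolynomial.C (k : ℂ)) ^ l *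
          (X 0 + X 1 - MvPolynomial.C (k : ℂ)) ^ n : P3) * embt f := by
    rw [map_mul, map_mul, map_pow, map_pow, map_add, Ssub_X0, Ssub_X1, Ssub_embt]
    ring
  have hT : Tsub k ((X (0 : Fin 3) : P3) ^ l * (X 0 + X 1) ^ n * embt f)
      = ((X 0 : P3) ^ l * (X 0 + X 1 - MvPolynomial.C (k : ℂ)) ^ n) * embt f := by
    rw [map_mul, map_mul, map_pow, map_pow, map_add, Tsub_X0, Tsub_X1, Tsub_embt]
    ring
  have hpd : pderiv (2 : Fin 3)
      (((X 0 - MvPolynomial.C (k : ℂ)) ^ l *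
        (X 0 + X 1 - MvPolynomial.C (k : ℂ)) ^ n : P3)) = 0 := by
    simp [Derivation.leibniz, Derivation.leibniz_pow,
      pderiv_X_of_ne (show (0 : Fin 3) ≠ 2 by decide),
      pderiv_X_of_ne (show (1 : Fin 3) ≠ 2 by decide)]
  rw [Dlin_apply, hS, hT, FFl_mul _ _ _ hpd]
  rw [embt_mul, embt_sub, embt_mul, embt_mul, embt_C, embt_C, embt_C, embt_Gop]
  simp only [map_mul, map_sub, map_pow, Polynomial.aeval_X, Polynomial.aeval_C,
    MvPolynomial.algebraMap_eq ℂ (Fin 3), MvPolynomial.C_mul, MvPolynomial.C_neg]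
  ring

end Stmt7Aux

open Stmt7Aux

/-- Let `λ, α, β ∈ ℂ*`, `h ∈ ℂ[t]` with `deg h = 1`, and `m ∈ ℤ≥0`.  Then `W_m` is a
Virasoro submodule of `Ω(λ,α,h) ⊗ Ω(λ,β)` (it is stable under all `d_k`; the condition
for `c` is vacuous since `c` acts by `0`). -/
theorem stmt7 (lam α β : ℂ) (hlam : lam ≠ 0) (hα : α ≠ 0) (hβ : β ≠ 0)
    (h : ℂ[X]) (hh : h.degree = 1) (m : ℕ) :
    ∀ (k : ℤ) (w : P3), w ∈ Wsub (m : ℤ) → tensorD lam α β h k w ∈ Wsub (m : ℤ) := by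
  intro k w hw
  rw [tensorD_eq]
  refine Submodule.smul_mem _ _ ?_
  have key : {q : P3 | ∃ (l n : ℕ) (f : ℂ[X]), (l : ℤ) ≤ (m : ℤ) ∧
      q = (MvPolynomial.X (0 : Fin 3)) ^ l *
        (MvPolynomial.X (0 : Fin 3) + MvPolynomial.X (1 : Fin 3)) ^ n * embt f}
      ⊆ (Wsub (m : ℤ)).comap (Dlin α β h k) := by
    rintro q ⟨l, n, f, hl, rfl⟩
    have hlm : l ≤ m := by exact_mod_cast hl
    simp only [SetLike.mem_coe, Submodule.mem_comap]
    rw [Dlin_gen]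
    refine Submodule.add_mem _ (Submodule.add_mem _ (Submodule.add_mem _ ?_ ?_) ?_) ?_
    · exact mem_W m _ _ _ (le_trans (deg_aux (k : ℂ) l) hlm)
    · refine mem_W m _ _ _ (le_trans ?_ hlm)
      refine le_trans (Polynomial.natDegree_pow_le) ?_
      rw [Polynomial.natDegree_X_sub_C]
      omega
    · refine mem_W m _ _ _ ?_
      rw [Polynomial.natDegree_X_pow]
      exact hlm
    · refine mem_W m _ _ _ ?_
      rw [Polynomial.natDegree_X_pow]
      exact hlm
  exact (Submodule.span_le.mpr key) hw
end
end

section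
/- Let $\lambda \in \mathbb{C}^*$, $\alpha \in \mathbb{C}$, $\beta \in \mathbb{C}$ with $\beta \neq 0$ (so in particular $W_0$ is a proper nonzero subspace). If $\lambda_1 = \lambda_2 = \lambda$, then the tensor product Virasoro module $\Omega(\lambda,\alpha,h) \otimes \Omega(\lambda,\beta)$ is not simple: it contains the proper nonzero submodule $W_0 = \mathrm{span}\{(\partial_1+\partial_2)^n f(t) : n \in \mathbb{Z}_{\geq 0}, f \in \mathbb{C}[t]\}$. -/
noncomputable section
open Polynomial

/-! ### Auxiliary machinery -/

local notation "Y0" => (MvPolynomial.X (0 : Fin 3) : P3)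
local notation "Y1" => (MvPolynomial.X (1 : Fin 3) : P3)
local notation "Y2" => (MvPolynomial.X (2 : Fin 3) : P3)
local notation "CC" => (MvPolynomial.C : ℂ →+* P3)

/-- The summand of `tensorD`, without the coefficient. -/
def Dterm (α β : ℂ) (h : ℂ[X]) (k : ℤ) (e : Fin 3 →₀ ℕ) : P3 :=
  (Y0 - CC ((k : ℂ))) ^ (e 0) *
      (Y0 * embt (Polynomial.X ^ (e 2))
        + CC ((k : ℂ)) * embt (Gop h α (Polynomial.X ^ (e 2)))
        - CC ((k : ℂ) ^ 2 * α) * embt (Fop h α (Polynomial.X ^ (e 2)))) *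
      Y1 ^ (e 1)
    + Y0 ^ (e 0) * embt (Polynomial.X ^ (e 2)) *
        (Y1 - CC ((k : ℂ))) ^ (e 1) * (Y1 - CC (β * k))

lemma sum_support_subset (p : P3) (T : (Fin 3 →₀ ℕ) → P3) {s : Finset (Fin 3 →₀ ℕ)}
    (hs : p.support ⊆ s) :
    ∑ e ∈ p.support, CC (MvPolynomial.coeff e p) * T e
      = ∑ e ∈ s, CC (MvPolynomial.coeff e p) * T e := by
  refine Finset.sum_subset hs ?_
  intro e _ he
  simp [MvPolynomial.notMem_support_iff.mp he]

/-- The support-sum construction, as a linear map. -/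
def SL (T : (Fin 3 →₀ ℕ) → P3) : P3 →ₗ[ℂ] P3 where
  toFun p := ∑ e ∈ p.support, CC (MvPolynomial.coeff e p) * T e
  map_add' p q := by
    show _ = _
    rw [sum_support_subset (p+q) T (MvPolynomial.support_add (p := p) (q := q)),
      sum_support_subset p T (Finset.subset_union_left (s₁ := p.support) (s₂ := q.support)),
      sum_support_subset q T (Finset.subset_union_right (s₁ := p.support) (s₂ := q.support)),
      ← Finset.sum_add_distrib]
    refine Finset.sum_congr rfl fun e _ => ?_
    rw [MvPolynomial.coeff_add, map_add, add_mul]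
  map_smul' c p := by
    show _ = _
    rw [sum_support_subset (c • p) T (MvPolynomial.support_smul (a := c) (f := p))]
    simp only [RingHom.id_apply, Finset.smul_sum, MvPolynomial.smul_eq_C_mul]
    refine Finset.sum_congr rfl fun e _ => ?_
    rw [MvPolynomial.coeff_C_mul, map_mul, mul_assoc]

lemma SL_monomial (T : (Fin 3 →₀ ℕ) → P3) (v : Fin 3 →₀ ℕ) (a : ℂ) :
    SL T (MvPolynomial.monomial v a) = CC a * T v := by
  rcases eq_or_ne a 0 with rfl | ha
  · simp [SL, MvPolynomial.support_monomial]
  · simp [SL, MvPolynomial.support_monomial, ha, MvPolynomial.coeff_monomial]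

/-- Substitution `∂₁ ↦ ∂₁ - k`. -/
def tauA (k : ℤ) : P3 →ₐ[ℂ] P3 := MvPolynomial.aeval ![Y0 - CC (k:ℂ), Y1, Y2]
/-- Substitution `∂₂ ↦ ∂₂ - k`. -/
def sigA (k : ℤ) : P3 →ₐ[ℂ] P3 := MvPolynomial.aeval ![Y0, Y1 - CC (k:ℂ), Y2]

/-- The multiplier `k t - k² α` (in `P3`). -/
def CkP (α : ℂ) (k : ℤ) : P3 := CC (k:ℂ) * Y2 - CC ((k:ℂ)^2 * α)

/-- The multiplier `∂₁ + k h(α) + (k t - k² α) (h(t)-h(α))/(t-α)`. -/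
def Bpoly (α : ℂ) (h : ℂ[X]) (k : ℤ) : P3 :=
  Y0 + CC ((k:ℂ) * h.eval α) + CkP α k * embt (hquot h α)

/-- The linear operator which `tensorD` (divided by `λᵏ`) turns out to equal. -/
def Rlin (α β : ℂ) (h : ℂ[X]) (k : ℤ) : P3 →ₗ[ℂ] P3 :=
  (LinearMap.mulLeft ℂ (Bpoly α h k)).comp (tauA k).toLinearMap
    - (LinearMap.mulLeft ℂ (CkP α k)).comp
        (((MvPolynomial.pderiv (2 : Fin 3)).toLinearMap).comp (tauA k).toLinearMap)
    + (LinearMap.mulLeft ℂ (Y1 - CC (β * k))).comp (sigA k).toLinearMap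

lemma tauA_monomial (k : ℤ) (v : Fin 3 →₀ ℕ) (a : ℂ) :
    tauA k (MvPolynomial.monomial v a)
      = CC a * ((Y0 - CC (k:ℂ)) ^ (v 0) * Y1 ^ (v 1) * Y2 ^ (v 2)) := by
  rw [MvPolynomial.monomial_eq, Finsupp.prod_pow]
  simp [tauA, Fin.prod_univ_three, MvPolynomial.algebraMap_eq, mul_assoc]

lemma sigA_monomial (k : ℤ) (v : Fin 3 →₀ ℕ) (a : ℂ) :
    sigA k (MvPolynomial.monomial v a)
      = CC a * (Y0 ^ (v 0) * (Y1 - CC (k:ℂ)) ^ (v 1) * Y2 ^ (v 2)) := by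
  rw [MvPolynomial.monomial_eq, Finsupp.prod_pow]
  simp [sigA, Fin.prod_univ_three, MvPolynomial.algebraMap_eq, mul_assoc]

lemma embt_X_pow (c : ℕ) : embt (Polynomial.X ^ c) = Y2 ^ c := by
  simp [embt]

lemma embt_C (a : ℂ) : embt (Polynomial.C a) = CC a := by
  simp [embt]

lemma embt_mul (f g : ℂ[X]) : embt (f * g) = embt f * embt g := by
  simp [embt]

lemma embt_F (h : ℂ[X]) (α : ℂ) (c : ℕ) :
    embt (Fop h α (Polynomial.X ^ c))
      = embt (hquot h α) * Y2 ^ c - CC (c : ℂ) * Y2 ^ (c - 1) := by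
  rw [Fop, derivative_X_pow]
  simp [embt, map_sub, map_mul]

lemma embt_G (h : ℂ[X]) (α : ℂ) (c : ℕ) :
    embt (Gop h α (Polynomial.X ^ c))
      = CC (h.eval α) * Y2 ^ c
        + Y2 * (embt (hquot h α) * Y2 ^ c - CC (c : ℂ) * Y2 ^ (c - 1)) := by
  rw [Gop, ← embt_F]
  simp [embt, map_add, map_mul]

lemma pderiv_pow_two (c : ℕ) :
    MvPolynomial.pderiv (2 : Fin 3) ((Y2 : P3) ^ c) = CC (c : ℂ) * Y2 ^ (c - 1) := by
  rw [MvPolynomial.pderiv_pow, MvPolynomial.pderiv_X_self]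
  rw [MvPolynomial.C_eq_coe_nat]
  ring

lemma key_monomial (α β : ℂ) (h : ℂ[X]) (k : ℤ) (v : Fin 3 →₀ ℕ) (a : ℂ) :
    SL (Dterm α β h k) (MvPolynomial.monomial v a)
      = Rlin α β h k (MvPolynomial.monomial v a) := by
  rw [SL_monomial]
  simp only [Rlin, LinearMap.add_apply, LinearMap.sub_apply, LinearMap.comp_apply,
    AlgHom.toLinearMap_apply, Derivation.coeFn_coe, LinearMap.mulLeft_apply]
  rw [tauA_monomial, sigA_monomial]
  rw [show (MvPolynomial.pderiv (2 : Fin 3))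
        (CC a * ((Y0 - CC (k:ℂ)) ^ (v 0) * Y1 ^ (v 1) * Y2 ^ (v 2)))
      = CC a * ((Y0 - CC (k:ℂ)) ^ (v 0) * Y1 ^ (v 1) * (CC ((v 2 : ℂ)) * Y2 ^ (v 2 - 1))) by
    simp [MvPolynomial.pderiv_mul, MvPolynomial.pderiv_pow, MvPolynomial.pderiv_X_self,
      pderiv_pow_two, MvPolynomial.pderiv_X_of_ne]
    try ring]
  rw [Dterm, embt_F, embt_G, embt_X_pow, Bpoly, CkP]
  simp only [map_mul, map_pow]
  ring

/-- The key formula: `tensorD` is `λᵏ` times the linear operator `Rlin`. -/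
lemma tensorD_eq (lam α β : ℂ) (h : ℂ[X]) (k : ℤ) (p : P3) :
    tensorD lam α β h k p = lam ^ k • Rlin α β h k p := by
  have hSL : ∀ q : P3, SL (Dterm α β h k) q = Rlin α β h k q := by
    intro q
    rw [q.as_sum, map_sum, map_sum]
    exact Finset.sum_congr rfl fun v _ => key_monomial α β h k v _
  rw [tensorD, ← hSL]
  rfl

/-! ### Membership lemmas for `Wsub 0` -/

lemma mem_gen (n : ℕ) (f : ℂ[X]) : (Y0 + Y1) ^ n * embt f ∈ Wsub 0 :=
  Submodule.subset_span ⟨0, n, f, by norm_num, by ring⟩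

lemma mul_s_mem {w : P3} (hw : w ∈ Wsub 0) : (Y0 + Y1) * w ∈ Wsub 0 := by
  induction hw using Submodule.span_induction with
  | mem x hx =>
    obtain ⟨l, n, f, hl, rfl⟩ := hx
    have hl0 : l = 0 := by omega
    subst hl0
    refine Submodule.subset_span ⟨0, n + 1, f, by norm_num, by ring⟩
  | zero => simpa using Submodule.zero_mem _
  | add x y _ _ hx hy => rw [mul_add]; exact Submodule.add_mem _ hx hy
  | smul c x _ hx => rw [mul_smul_comm]; exact Submodule.smul_mem _ _ hx

lemma mul_embt_mem (g : ℂ[X]) {w : P3} (hw : w ∈ Wsub 0) : embt g * w ∈ Wsub 0 := by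
  induction hw using Submodule.span_induction with
  | mem x hx =>
    obtain ⟨l, n, f, hl, rfl⟩ := hx
    have hl0 : l = 0 := by omega
    subst hl0
    refine Submodule.subset_span ⟨0, n, g * f, by norm_num, by rw [embt_mul]; ring⟩
  | zero => simpa using Submodule.zero_mem _
  | add x y _ _ hx hy => rw [mul_add]; exact Submodule.add_mem _ hx hy
  | smul c x _ hx => rw [mul_smul_comm]; exact Submodule.smul_mem _ _ hx

lemma sk_mem (k : ℂ) (n : ℕ) (f : ℂ[X]) :
    (Y0 + Y1 - CC k) ^ n * embt f ∈ Wsub 0 := by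
  induction n with
  | zero => simpa using mem_gen 0 f
  | succ n ih =>
    have : (Y0 + Y1 - CC k) ^ (n + 1) * embt f
        = (Y0 + Y1) * ((Y0 + Y1 - CC k) ^ n * embt f)
          - k • ((Y0 + Y1 - CC k) ^ n * embt f) := by
      rw [MvPolynomial.smul_eq_C_mul]; ring
    rw [this]
    exact Submodule.sub_mem _ (mul_s_mem ih) (Submodule.smul_mem _ _ ih)

lemma tauA_embt (k : ℤ) (f : ℂ[X]) : tauA k (embt f) = embt f := by
  rw [embt, ← Polynomial.aeval_algHom_apply]
  simp [tauA]

lemma sigA_embt (k : ℤ) (f : ℂ[X]) : sigA k (embt f) = embt f := by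
  rw [embt, ← Polynomial.aeval_algHom_apply]
  simp [sigA]

lemma pderiv_embt (f : ℂ[X]) :
    MvPolynomial.pderiv (2 : Fin 3) (embt f) = embt (derivative f) := by
  induction f using Polynomial.induction_on' with
  | add p q hp hq => simp [embt, map_add] at hp hq ⊢; try simp [hp, hq]
  | monomial n a =>
    simp [embt, Polynomial.aeval_monomial, derivative_monomial,
      MvPolynomial.pderiv_mul, MvPolynomial.pderiv_pow, MvPolynomial.pderiv_X_self,
      MvPolynomial.algebraMap_eq]
    try ring

lemma CkP_eq_embt (α : ℂ) (k : ℤ) :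
    CkP α k = embt (Polynomial.C (k:ℂ) * Polynomial.X - Polynomial.C ((k:ℂ)^2 * α)) := by
  simp [CkP, embt]

lemma Rlin_gen (α β : ℂ) (h : ℂ[X]) (k : ℤ) (n : ℕ) (f : ℂ[X]) :
    Rlin α β h k ((Y0 + Y1) ^ n * embt f) ∈ Wsub 0 := by
  have ht0 : tauA k Y0 = Y0 - CC (k:ℂ) := by simp [tauA]
  have ht1 : tauA k Y1 = Y1 := by simp [tauA]
  have hs0 : sigA k Y0 = Y0 := by simp [sigA]
  have hs1 : sigA k Y1 = Y1 - CC (k:ℂ) := by simp [sigA]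
  have htau : tauA k ((Y0 + Y1) ^ n * embt f)
      = (Y0 + Y1 - CC (k:ℂ)) ^ n * embt f := by
    rw [map_mul, map_pow, map_add, tauA_embt, ht0, ht1, sub_add_eq_add_sub]
  have hsig : sigA k ((Y0 + Y1) ^ n * embt f)
      = (Y0 + Y1 - CC (k:ℂ)) ^ n * embt f := by
    rw [map_mul, map_pow, map_add, sigA_embt, hs0, hs1, ← add_sub_assoc]
  have hpd : MvPolynomial.pderiv (2 : Fin 3) ((Y0 + Y1 - CC (k:ℂ)) ^ n * embt f)
      = (Y0 + Y1 - CC (k:ℂ)) ^ n * embt (derivative f) := by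
    rw [MvPolynomial.pderiv_mul, pderiv_embt, MvPolynomial.pderiv_pow]
    simp [MvPolynomial.pderiv_X_of_ne]
  have hexp : Rlin α β h k ((Y0 + Y1) ^ n * embt f)
      = (Y0 + Y1) * ((Y0 + Y1 - CC (k:ℂ)) ^ n * embt f)
        + ((k:ℂ) * h.eval α - β * k) • ((Y0 + Y1 - CC (k:ℂ)) ^ n * embt f)
        + embt ((Polynomial.C (k:ℂ) * Polynomial.X - Polynomial.C ((k:ℂ)^2 * α)) * hquot h α)
            * ((Y0 + Y1 - CC (k:ℂ)) ^ n * embt f)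
        - embt (Polynomial.C (k:ℂ) * Polynomial.X - Polynomial.C ((k:ℂ)^2 * α))
            * ((Y0 + Y1 - CC (k:ℂ)) ^ n * embt (derivative f)) := by
    simp only [Rlin, LinearMap.add_apply, LinearMap.sub_apply, LinearMap.comp_apply,
      AlgHom.toLinearMap_apply, LinearMap.mulLeft_apply, Derivation.coeFn_coe]
    rw [htau, hsig, hpd, Bpoly, CkP_eq_embt, embt_mul, MvPolynomial.smul_eq_C_mul]
    simp only [map_sub, map_mul]
    ring
  rw [hexp]
  refine Submodule.sub_mem _ (Submodule.add_mem _ (Submodule.add_mem _ ?_ ?_) ?_) ?_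
  · exact mul_s_mem (sk_mem _ n f)
  · exact Submodule.smul_mem _ _ (sk_mem _ n f)
  · exact mul_embt_mem _ (sk_mem _ n f)
  · exact mul_embt_mem _ (sk_mem _ n (derivative f))

/-! ### The theorem -/

/-- Let `λ ∈ ℂ*`, `α ∈ ℂ`, `β ∈ ℂ` with `β ≠ 0`.  The tensor product Virasoro module
`Ω(λ,α,h) ⊗ Ω(λ,β)` (equal "λ's" in the two factors) is not simple: the subspace
`W_0 = span{(∂₁+∂₂)^n f(t)}` is a proper nonzero submodule. -/
theorem stmt9 (lam α β : ℂ) (hlam : lam ≠ 0) (hβ : β ≠ 0) (h : ℂ[X]) :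
    Wsub 0 ≠ ⊥ ∧ Wsub 0 ≠ ⊤ ∧
      ∀ (k : ℤ) (w : P3), w ∈ Wsub 0 → tensorD lam α β h k w ∈ Wsub 0 := by
  refine ⟨?_, ?_, ?_⟩
  · -- nonzero
    intro hb
    have h1 : (1 : P3) ∈ Wsub 0 := by simpa [embt] using mem_gen 0 1
    rw [hb, Submodule.mem_bot] at h1
    exact one_ne_zero h1
  · -- proper
    intro ht
    set φ : P3 →ₐ[ℂ] ℂ[X] :=
      MvPolynomial.aeval ![Polynomial.X, -Polynomial.X, 0] with hφ
    have hvan : ∀ w ∈ Wsub 0, (φ w).coeff 1 = 0 := by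
      intro w hw
      induction hw using Submodule.span_induction with
      | mem x hx =>
        obtain ⟨l, n, f, hl, rfl⟩ := hx
        have hl0 : l = 0 := by omega
        subst hl0
        have hembt : φ (embt f) = Polynomial.C (f.coeff 0) := by
          rw [embt, ← Polynomial.aeval_algHom_apply]
          simp [hφ]
          rw [Polynomial.aeval_def, Polynomial.eval₂_at_zero]
          rfl
        rw [map_mul, map_mul, map_pow, map_pow, map_add, hembt]
        have e0 : φ Y0 = Polynomial.X := by simp [hφ]
        have e1 : φ Y1 = -Polynomial.X := by simp [hφ]
        rw [e0, e1]
        cases n with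
        | zero => simp [Polynomial.coeff_C]
        | succ m => simp [zero_pow]
      | zero => simp
      | add x y _ _ hx hy => rw [map_add, Polynomial.coeff_add, hx, hy, add_zero]
      | smul c x _ hx => rw [map_smul, Polynomial.coeff_smul, hx, smul_zero]
    have hY0 : (Y0 : P3) ∈ Wsub 0 := ht ▸ Submodule.mem_top
    have := hvan Y0 hY0
    rw [hφ] at this
    simp at this
  · -- invariance
    intro k w hw
    rw [tensorD_eq]
    refine Submodule.smul_mem _ _ ?_
    induction hw using Submodule.span_induction with
    | mem x hx =>
      obtain ⟨l, n, f, hl, rfl⟩ := hx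
      have hl0 : l = 0 := by omega
      subst hl0
      simpa using Rlin_gen α β h k n f
    | zero => simpa using Submodule.zero_mem _
    | add x y _ _ hx hy => rw [map_add]; exact Submodule.add_mem _ hx hy
    | smul c x _ hx => rw [map_smul]; exact Submodule.smul_mem _ _ hx
end
end

section
/- Let $\lambda,\alpha \in \mathbb{C}^*$, $h \in \mathbb{C}[t]$ with $\deg h = 1$, and $\beta \in \mathbb{C}$. In $\Omega(\lambda,\alpha,h)\otimes\Omega(\lambda,\beta) = \mathbb{C}[\partial_1,\partial_2,t]$, for all $k \in \mathbb{Z}$, $l, n \in \mathbb{Z}_{\geq 0}$ and $f \in \mathbb{C}[t]$, one has $\lambda^{-k} d_k\big(\partial_1^l(\partial_1+\partial_2)^n f\big) = \big[\partial_1\big((\partial_1-k)^l - \partial_1^l\big)f + \big(kG(f) - k^2\alpha F(f)\big)(\partial_1-k)^l\big](\partial_1+\partial_2-k)^n + \partial_1^l f\,(\partial_1+\partial_2 - \beta k)(\partial_1+\partial_2-k)^n$. -/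
noncomputable section
open Polynomial

/-! The operator `λ^{-k} d_k` sends `P(∂₁,∂₂) f(t)` to
`P(∂₁-k,∂₂) (∂₁ f + k G(f) - k² α F(f)) + P(∂₁,∂₂-k) f (∂₂-βk)`: on monomials this is the
definition of the diagonal action, and both sides are linear in `P` and in `f`.
For `P = ∂₁^l (∂₁+∂₂)^n` both shifts turn `(∂₁+∂₂)^n` into `(∂₁+∂₂-k)^n`, and the claimed
formula is a rearrangement of the result. -/

local notation "∂₁" => MvPolynomial.X (R := ℂ) (0 : Fin 3)
local notation "∂₂" => MvPolynomial.X (R := ℂ) (1 : Fin 3)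

section

variable (α β : ℂ) (h : ℂ[X]) (k : ℤ)

/-- `λ^{-k} d_k f` for `f ∈ ℂ[t] ⊂ Ω(λ,α,h)`. -/
def dOnT (f : ℂ[X]) : P3 :=
  ∂₁ * embt f + MvPolynomial.C (k : ℂ) * embt (Gop h α f)
    - MvPolynomial.C ((k : ℂ) ^ 2 * α) * embt (Fop h α f)

lemma dOnT_add (f g : ℂ[X]) :
    dOnT α h k (f + g) = dOnT α h k f + dOnT α h k g := by
  simp only [dOnT, Gop, Fop, embt, map_add, map_sub, map_mul]
  ring

lemma dOnT_smul (a : ℂ) (f : ℂ[X]) :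
    dOnT α h k (a • f) = a • dOnT α h k f := by
  simp only [dOnT, Gop, Fop, embt, map_add, map_sub, map_mul, map_smul,
    mul_smul_comm, MvPolynomial.smul_eq_C_mul]
  ring

/-- `λ^{-k} d_k` on the basis vector `∂₁^a t^c ⊗ ∂₂^b`, where `e = (a, b, c)`. -/
def dMonomial (e : Fin 3 →₀ ℕ) : P3 :=
  (∂₁ - MvPolynomial.C (k : ℂ)) ^ e 0 * dOnT α h k (X ^ e 2) * ∂₂ ^ e 1
    + ∂₁ ^ e 0 * embt (X ^ e 2) * (∂₂ - MvPolynomial.C (k : ℂ)) ^ e 1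
      * (∂₂ - MvPolynomial.C (β * k))

/-- `λ^{-k} d_k` on `Ω(λ,α,h) ⊗ Ω(λ,β)`, as a linear map. -/
def virasoroD : P3 →ₗ[ℂ] P3 :=
  (MvPolynomial.basisMonomials (Fin 3) ℂ).constr ℂ (dMonomial α β h k)

lemma tensorD_eq_zpow_smul_virasoroD (lam : ℂ) (p : P3) :
    tensorD lam α β h k p = lam ^ k • virasoroD α β h k p := by
  rw [tensorD, virasoroD, Module.Basis.constr_apply]
  congr 1
  simp only [Finsupp.sum, MvPolynomial.smul_eq_C_mul]
  -- `(basisMonomials _ _).repr p` is `p` itself, seen as a finsupp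
  rfl

lemma virasoroD_monomial (e : Fin 3 →₀ ℕ) :
    virasoroD α β h k (MvPolynomial.monomial e 1) = dMonomial α β h k e :=
  (MvPolynomial.basisMonomials (Fin 3) ℂ).constr_basis ℂ (dMonomial α β h k) e

lemma virasoroD_X_pow_mul_embt_X_pow (a b c : ℕ) :
    virasoroD α β h k (∂₁ ^ a * ∂₂ ^ b * embt (X ^ c)) =
      (∂₁ - MvPolynomial.C (k : ℂ)) ^ a * dOnT α h k (X ^ c) * ∂₂ ^ b
        + ∂₁ ^ a * embt (X ^ c) * (∂₂ - MvPolynomial.C (k : ℂ)) ^ b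
          * (∂₂ - MvPolynomial.C (β * k)) := by
  have hmon : ∂₁ ^ a * ∂₂ ^ b * embt (X ^ c) =
      MvPolynomial.monomial (Finsupp.single 0 a + Finsupp.single 1 b + Finsupp.single 2 c) 1 := by
    simp [embt, MvPolynomial.X_pow_eq_monomial, MvPolynomial.monomial_mul]
  rw [hmon, virasoroD_monomial, dMonomial]
  simp

lemma virasoroD_X_pow_mul_embt (a b : ℕ) (f : ℂ[X]) :
    virasoroD α β h k (∂₁ ^ a * ∂₂ ^ b * embt f) =
      (∂₁ - MvPolynomial.C (k : ℂ)) ^ a * dOnT α h k f * ∂₂ ^ b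
        + ∂₁ ^ a * embt f * (∂₂ - MvPolynomial.C (k : ℂ)) ^ b * (∂₂ - MvPolynomial.C (β * k)) := by
  induction f using Polynomial.induction_on' with
  | add p q hp hq =>
    have embt_add : embt (p + q) = embt p + embt q := map_add _ _ _
    rw [embt_add, mul_add, map_add, hp, hq, dOnT_add]
    ring
  | monomial c r =>
    have embt_smul : embt (r • X ^ c) = r • embt (X ^ c) := map_smul _ _ _
    rw [← smul_X_eq_monomial, dOnT_smul, embt_smul, mul_smul_comm, map_smul,
      virasoroD_X_pow_mul_embt_X_pow]
    simp only [MvPolynomial.smul_eq_C_mul]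
    ring

lemma virasoroD_aeval_mul_embt (Q : MvPolynomial (Fin 2) ℂ) (f : ℂ[X]) :
    virasoroD α β h k (MvPolynomial.aeval ![∂₁, ∂₂] Q * embt f) =
      MvPolynomial.aeval ![∂₁ - MvPolynomial.C (k : ℂ), ∂₂] Q * dOnT α h k f
        + MvPolynomial.aeval ![∂₁, ∂₂ - MvPolynomial.C (k : ℂ)] Q * embt f
          * (∂₂ - MvPolynomial.C (β * k)) := by
  induction Q using MvPolynomial.induction_on' with
  | monomial u r =>
    simp only [MvPolynomial.aeval_monomial, Finsupp.prod_fintype _ _ (fun _ => pow_zero _),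
      Fin.prod_univ_two, Matrix.cons_val_zero, Matrix.cons_val_one,
      MvPolynomial.algebraMap_eq, mul_assoc, ← MvPolynomial.smul_eq_C_mul, smul_mul_assoc,
      map_smul]
    rw [← mul_assoc, virasoroD_X_pow_mul_embt]
    simp only [MvPolynomial.smul_eq_C_mul]
    ring
  | add P Q hP hQ =>
    rw [map_add, add_mul, map_add, hP, hQ, map_add, map_add]
    ring

end

theorem stmt10_general (lam α : ℂ) (hlam : lam ≠ 0) (h : ℂ[X])
    (β : ℂ) (k : ℤ) (l n : ℕ) (f : ℂ[X]) :
    lam ^ (-k) • tensorD lam α β h k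
        ((MvPolynomial.X (0 : Fin 3)) ^ l *
          (MvPolynomial.X (0 : Fin 3) + MvPolynomial.X (1 : Fin 3)) ^ n * embt f) =
      (MvPolynomial.X (0 : Fin 3) *
            ((MvPolynomial.X (0 : Fin 3) - MvPolynomial.C ((k : ℂ))) ^ l -
              (MvPolynomial.X (0 : Fin 3)) ^ l) * embt f
          + (MvPolynomial.C ((k : ℂ)) * embt (Gop h α f)
              - MvPolynomial.C ((k : ℂ) ^ 2 * α) * embt (Fop h α f)) *
            (MvPolynomial.X (0 : Fin 3) - MvPolynomial.C ((k : ℂ))) ^ l) *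
        (MvPolynomial.X (0 : Fin 3) + MvPolynomial.X (1 : Fin 3) - MvPolynomial.C ((k : ℂ))) ^ n
      + (MvPolynomial.X (0 : Fin 3)) ^ l * embt f *
          (MvPolynomial.X (0 : Fin 3) + MvPolynomial.X (1 : Fin 3) - MvPolynomial.C (β * k)) *
          (MvPolynomial.X (0 : Fin 3) + MvPolynomial.X (1 : Fin 3) -
            MvPolynomial.C ((k : ℂ))) ^ n := by
  have hP := virasoroD_aeval_mul_embt α β h k
    (MvPolynomial.X 0 ^ l * (MvPolynomial.X 0 + MvPolynomial.X 1) ^ n) f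
  simp only [map_mul, map_pow, map_add, MvPolynomial.aeval_X, Matrix.cons_val_zero,
    Matrix.cons_val_one] at hP
  rw [tensorD_eq_zpow_smul_virasoroD, smul_smul, ← zpow_add₀ hlam, neg_add_cancel, zpow_zero,
    one_smul, hP, dOnT]
  simp only [map_mul]
  ring

/-- Let `λ, α ∈ ℂ*`, `deg h = 1`, `β ∈ ℂ`.  In `Ω(λ,α,h) ⊗ Ω(λ,β) = ℂ[∂₁,∂₂,t]`, for all
`k ∈ ℤ`, `l, n ∈ ℤ≥0`, `f ∈ ℂ[t]`:
`λ^{-k} d_k(∂₁^l (∂₁+∂₂)^n f) = [∂₁((∂₁-k)^l - ∂₁^l) f + (k G(f) - k² α F(f))(∂₁-k)^l] (∂₁+∂₂-k)^n`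
`+ ∂₁^l f (∂₁+∂₂-βk)(∂₁+∂₂-k)^n`. -/
theorem stmt10 (lam α : ℂ) (hlam : lam ≠ 0) (hα : α ≠ 0) (h : ℂ[X]) (hh : h.degree = 1)
    (β : ℂ) (k : ℤ) (l n : ℕ) (f : ℂ[X]) :
    lam ^ (-k) • tensorD lam α β h k
        ((MvPolynomial.X (0 : Fin 3)) ^ l *
          (MvPolynomial.X (0 : Fin 3) + MvPolynomial.X (1 : Fin 3)) ^ n * embt f) =
      (MvPolynomial.X (0 : Fin 3) *
            ((MvPolynomial.X (0 : Fin 3) - MvPolynomial.C ((k : ℂ))) ^ l -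
              (MvPolynomial.X (0 : Fin 3)) ^ l) * embt f
          + (MvPolynomial.C ((k : ℂ)) * embt (Gop h α f)
              - MvPolynomial.C ((k : ℂ) ^ 2 * α) * embt (Fop h α f)) *
            (MvPolynomial.X (0 : Fin 3) - MvPolynomial.C ((k : ℂ))) ^ l) *
        (MvPolynomial.X (0 : Fin 3) + MvPolynomial.X (1 : Fin 3) - MvPolynomial.C ((k : ℂ))) ^ n
      + (MvPolynomial.X (0 : Fin 3)) ^ l * embt f *
          (MvPolynomial.X (0 : Fin 3) + MvPolynomial.X (1 : Fin 3) - MvPolynomial.C (β * k)) *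
          (MvPolynomial.X (0 : Fin 3) + MvPolynomial.X (1 : Fin 3) -
            MvPolynomial.C ((k : ℂ))) ^ n :=
  stmt10_general lam α hlam h β k l n f
end
end

section
/- Let $\mathrm{Vir}$ be the Virasoro algebra and for $s \in \mathbb{Z}_{\geq 0}$, $l, m \in \mathbb{Z}$ define $\omega^{(s)}_{l,m} = \sum_{i=0}^s \binom{s}{i}(-1)^{s-i} d_{l-m-i} d_{m+i} \in U(\mathrm{Vir})$. Then in the module $A_b = \mathbb{C}[t,t^{-1}]$ with action $d_k(t^n) = (n+b+bk)t^{n+k}$, $c = 0$ ($b \in \mathbb{C}$), one has $\omega^{(r)}_{l,m}(A_b) = 0$ for all $l,m \in \mathbb{Z}$ and all $r \geq 3$. -/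
noncomputable section

/-- The Lu–Zhao module `A_b = ℂ[t, t⁻¹]`, modelled as `ℤ →₀ ℂ`
(the Laurent monomial `t^n` corresponds to `Finsupp.single n 1`),
with Virasoro action `d_k (t^n) = (n + b + b k) t^{n+k}` and `c = 0`. -/
def dA (b : ℂ) (k : ℤ) (y : ℤ →₀ ℂ) : ℤ →₀ ℂ :=
  y.sum fun n a => Finsupp.single (n + k) (((n : ℂ) + b + b * k) * a)

/-- The operator `ω^{(s)}_{l,m} = ∑_{i=0}^s C(s,i) (-1)^{s-i} d_{l-m-i} d_{m+i}`,
acting on `A_b`. -/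
def omegaA (b : ℂ) (s : ℕ) (l m : ℤ) (y : ℤ →₀ ℂ) : ℤ →₀ ℂ :=
  ∑ i ∈ Finset.range (s + 1),
    ((s.choose i : ℂ) * (-1 : ℂ) ^ (s - i)) • dA b (l - m - i) (dA b (m + i) y)

/-! On a monomial `t^n`, the summand `d_{l-m-i} d_{m+i}` of `ω^{(s)}_{l,m}` acts as the scalar
`(n + m + i + b + b(l - m - i)) (n + b + b(m + i))` times `t^{n+l}`, a polynomial of degree at most
two in `i`. The alternating binomial sum defining `ω^{(s)}_{l,m}` is the `s`-th forward difference
at `0`, which kills every polynomial of degree less than `s`. -/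

open Finset Polynomial

theorem Polynomial.sum_range_choose_mul_neg_one_pow_mul_eval_eq_zero {R : Type*} [CommRing R]
    (P : R[X]) {s : ℕ} (hs : P.natDegree < s) :
    ∑ i ∈ range (s + 1), ((s.choose i : R) * (-1 : R) ^ (s - i)) * P.eval (i : R) = 0 := by
  have h := congr_fun (fwdDiff_iter_eq_zero_of_degree_lt hs) 0
  rw [fwdDiff_iter_eq_sum_shift, Pi.zero_apply] at h
  rw [← h]
  refine sum_congr rfl fun i _ => ?_
  rw [zsmul_eq_mul, nsmul_eq_mul, zero_add, mul_one]
  push_cast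
  ring

lemma dA_single (b : ℂ) (k n : ℤ) (a : ℂ) :
    dA b k (Finsupp.single n a) = Finsupp.single (n + k) (((n : ℂ) + b + b * k) * a) := by
  rw [dA, Finsupp.sum_single_index]
  simp

lemma dA_add (b : ℂ) (k : ℤ) (x y : ℤ →₀ ℂ) : dA b k (x + y) = dA b k x + dA b k y :=
  Finsupp.sum_add_index' (by simp) fun _ _ _ => by rw [mul_add, Finsupp.single_add]

lemma omegaA_zero (b : ℂ) (s : ℕ) (l m : ℤ) : omegaA b s l m 0 = 0 := by
  simp [omegaA, dA]

lemma omegaA_add (b : ℂ) (s : ℕ) (l m : ℤ) (x y : ℤ →₀ ℂ) :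
    omegaA b s l m (x + y) = omegaA b s l m x + omegaA b s l m y := by
  simp only [omegaA, dA_add, smul_add, sum_add_distrib]

lemma omegaA_single_eq_zero (b : ℂ) {s : ℕ} (hs : 3 ≤ s) (l m n : ℤ) (a : ℂ) :
    omegaA b s l m (Finsupp.single n a) = 0 := by
  set P : ℂ[X] := (C ((n : ℂ) + m + b + b * (l - m)) + C (1 - b) * X) *
    (C ((n : ℂ) + b + b * m) + C b * X)
  have hP : P.natDegree < s := by
    refine lt_of_le_of_lt (b := 2) ?_ (by omega)
    dsimp only [P]
    compute_degree
  have hterm : ∀ i : ℕ, dA b (l - m - i) (dA b (m + i) (Finsupp.single n a)) =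
      Finsupp.single (n + l) (P.eval (i : ℂ) * a) := by
    intro i
    rw [dA_single, dA_single]
    congr 1
    · ring
    · simp only [P, eval_mul, eval_add, eval_C, eval_X]
      push_cast
      ring
  simp only [omegaA, hterm, Finsupp.smul_single, smul_eq_mul, ← mul_assoc,
    ← Finsupp.single_finsetSum, ← sum_mul,
    P.sum_range_choose_mul_neg_one_pow_mul_eval_eq_zero hP, zero_mul, Finsupp.single_zero]

/-- In the module `A_b` one has `ω^{(r)}_{l,m}(A_b) = 0` for all `l, m ∈ ℤ` and all `r ≥ 3`. -/
theorem stmt16 (b : ℂ) (l m : ℤ) (r : ℕ) (hr : 3 ≤ r) (y : ℤ →₀ ℂ) :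
    omegaA b r l m y = 0 := by
  induction y using Finsupp.induction with
  | zero => exact omegaA_zero b r l m
  | single_add n a y _ _ ih =>
    rw [omegaA_add, ih, omegaA_single_eq_zero b hr, add_zero]
end
end
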